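/- For the explicit piecewise linear density f, the middle part of the convolution is negligible uniformly on blocks: sup_{x ∈ (a_n, a_{n+1}]} (∫_{a_{m_n}}^{x − a_{m_n}} f(x−y) f(y) dy) / f(x) → 0 as n → ∞ (the integral being interpreted as 0 when x < 2 a_{m_n}). -/

import Mathlib

/-!
On each block `[a_j, a_{j+1}]`, `j ≥ 2`, the function `f₀` interpolates node values lying in
`[2 / a_{j+1}³, 2 / a_j³]`. Hence, up to the normalising factor `c = (∫ f₀)⁻¹`, `f ≥ 2 / a_{n+1}³`
on `(a_n, a_{n+1}]`, while `f ≤ 2 / a_m³` on `[a_m, ∞)` with `m = m_n`. The middle integral is thus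
at most `c² (2 / a_m³)² a_{n+1}`, and the ratio at most `2c · a_{n+1}⁴ / a_m⁶ ≤ 2c · 2⁻ⁿ`.
-/

open MeasureTheory Filter Set

noncomputable section

/-- `a_n = 2^(n²)`. -/
def aSeq (n : ℕ) : ℝ := 2 ^ (n ^ 2)

/-- `m_n` : the least positive integer `k` with `k ≥ (√5/√6)·n`. -/
def mIdx (n : ℕ) : ℕ := max 1 ⌈(Real.sqrt 5 / Real.sqrt 6) * (n : ℝ)⌉₊

/-- `b_n = a_n + a_{m_n}·(ln (n+1))²`. -/
def bSeq (n : ℕ) : ℝ := aSeq n + aSeq (mIdx n) * (Real.log ((n : ℝ) + 1)) ^ 2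

/-- `c_n = (a_{n+1} + b_n)/2`. -/
def cSeq (n : ℕ) : ℝ := (aSeq (n + 1) + bSeq n) / 2

/-- `f` is affine (the linear interpolation of its endpoint values) on `[p, q]`. -/
def AffineOnIcc (f : ℝ → ℝ) (p q : ℝ) : Prop :=
  ∀ x ∈ Set.Icc p q, f x = f p + (x - p) / (q - p) * (f q - f p)

/-- The explicit continuous piecewise linear construction `f₀ : [0,∞) → (0,∞)`
with `f₀(0) = 1`, `f₀(a_n) = 2 a_n⁻³`, `f₀(b_n) = 2 a_n⁻³ / ln(n+1)`,
`f₀(c_n) = 2 a_n⁻³`, affine on `[0,a₁]`, `[a_n,b_n]`, `[b_n,c_n]`, `[c_n,a_{n+1}]`. -/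
def PWConstruction (f₀ : ℝ → ℝ) : Prop :=
  ContinuousOn f₀ (Set.Ici 0) ∧
  (∀ x : ℝ, 0 ≤ x → 0 < f₀ x) ∧
  f₀ 0 = 1 ∧
  (∀ n : ℕ, 1 ≤ n →
    f₀ (aSeq n) = 2 / (aSeq n) ^ 3 ∧
    f₀ (bSeq n) = 2 / (aSeq n) ^ 3 / Real.log ((n : ℝ) + 1) ∧
    f₀ (cSeq n) = 2 / (aSeq n) ^ 3) ∧
  AffineOnIcc f₀ 0 (aSeq 1) ∧
  (∀ n : ℕ, 1 ≤ n →
    AffineOnIcc f₀ (aSeq n) (bSeq n) ∧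
    AffineOnIcc f₀ (bSeq n) (cSeq n) ∧
    AffineOnIcc f₀ (cSeq n) (aSeq (n + 1)))

/-- The normalized extension `f = f₀ / ∫₀^∞ f₀(y) dy`, extended by `0` on `(-∞,0)`. -/
def normExt (f₀ : ℝ → ℝ) : ℝ → ℝ :=
  fun x => if x < 0 then 0 else f₀ x / ∫ y in Set.Ici (0:ℝ), f₀ y

lemma aSeq_pos (n : ℕ) : 0 < aSeq n := by unfold aSeq; positivity

lemma aSeq_strictMono : StrictMono aSeq := fun n k h => by
  unfold aSeq
  exact pow_lt_pow_right₀ one_lt_two (Nat.pow_lt_pow_left h two_ne_zero)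

lemma aSeq_succ (n : ℕ) : aSeq (n + 1) = aSeq n * 2 ^ (2 * n + 1) := by
  unfold aSeq; rw [← pow_add]; ring_nf

lemma tendsto_aSeq_atTop : Tendsto aSeq atTop atTop :=
  (tendsto_pow_atTop_atTop_of_one_lt one_lt_two).comp (tendsto_pow_atTop two_ne_zero)

lemma mIdx_le {n : ℕ} (hn : 1 ≤ n) : mIdx n ≤ n := by
  refine max_le hn (Nat.ceil_le.2 ?_)
  have : Real.sqrt 5 / Real.sqrt 6 ≤ 1 :=
    (div_le_one (by positivity)).2 (Real.sqrt_le_sqrt (by norm_num))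
  nlinarith [(Nat.cast_nonneg n : (0 : ℝ) ≤ n)]

lemma five_mul_sq_le_six_mul_mIdx_sq (n : ℕ) : 5 * n ^ 2 ≤ 6 * mIdx n ^ 2 := by
  have hle : Real.sqrt 5 / Real.sqrt 6 * n ≤ mIdx n :=
    (Nat.le_ceil _).trans (by exact_mod_cast le_max_right 1 _)
  have hsq := pow_le_pow_left₀ (by positivity) hle 2
  rw [mul_pow, div_pow, Real.sq_sqrt (by norm_num), Real.sq_sqrt (by norm_num)] at hsq
  have : (5 : ℝ) * n ^ 2 ≤ 6 * mIdx n ^ 2 := by linarith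
  exact_mod_cast this

/-- Here `6 m_n² ≥ 5 n² ≥ 4 (n + 1)² + n`: this is what the constant `√5 / √6` in `m_n` is for. -/
lemma aSeq_succ_pow_four_mul_two_pow_le {n : ℕ} (hn : 10 ≤ n) :
    aSeq (n + 1) ^ 4 * 2 ^ n ≤ aSeq (mIdx n) ^ 6 := by
  unfold aSeq
  rw [← pow_mul, ← pow_mul, ← pow_add]
  exact pow_le_pow_right₀ one_le_two (by nlinarith [five_mul_sq_le_six_mul_mIdx_sq n])

lemma tendsto_aSeq_succ_pow_four_div_aSeq_mIdx_pow_six :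
    Tendsto (fun n => aSeq (n + 1) ^ 4 / aSeq (mIdx n) ^ 6) atTop (nhds 0) := by
  refine tendsto_of_tendsto_of_tendsto_of_le_of_le' tendsto_const_nhds
    (tendsto_inv_atTop_zero.comp (tendsto_pow_atTop_atTop_of_one_lt (one_lt_two (α := ℝ))))
    (Eventually.of_forall fun n => by positivity) ?_
  filter_upwards [eventually_ge_atTop 10] with n hn
  rw [Function.comp_apply, div_le_iff₀ (by have := aSeq_pos (mIdx n); positivity),
    inv_mul_eq_div, le_div_iff₀ (by positivity)]
  exact aSeq_succ_pow_four_mul_two_pow_le hn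

lemma log_nat_add_one_le (n : ℕ) : Real.log ((n : ℝ) + 1) ≤ n := by
  linarith [Real.log_le_sub_one_of_pos (by positivity : (0 : ℝ) < n + 1)]

lemma log_nat_add_one_pos {n : ℕ} (hn : 1 ≤ n) : 0 < Real.log ((n : ℝ) + 1) :=
  Real.log_pos (by have : (1 : ℝ) ≤ n := (by exact_mod_cast hn); linarith)

lemma one_le_log_nat_add_one {n : ℕ} (hn : 2 ≤ n) : 1 ≤ Real.log ((n : ℝ) + 1) := by
  have : (2 : ℝ) ≤ n := by exact_mod_cast hn
  rw [Real.le_log_iff_exp_le (by positivity)]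
  linarith [Real.exp_one_lt_d9]

lemma aSeq_pow_three_mul_log_le (n : ℕ) :
    aSeq n ^ 3 * Real.log ((n : ℝ) + 1) ≤ aSeq (n + 1) ^ 3 := by
  have hn : (n : ℝ) < 2 ^ n := by exact_mod_cast Nat.lt_two_pow_self
  have h2 : (2 : ℝ) ^ n ≤ (2 ^ (2 * n + 1)) ^ 3 := by
    rw [← pow_mul]; exact pow_le_pow_right₀ one_le_two (by omega)
  have := aSeq_pos n
  rw [aSeq_succ, mul_pow]
  gcongr
  linarith [log_nat_add_one_le n]

lemma aSeq_lt_bSeq {n : ℕ} (hn : 1 ≤ n) : aSeq n < bSeq n := by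
  unfold bSeq
  have := mul_pos (aSeq_pos (mIdx n)) (pow_pos (log_nat_add_one_pos hn) 2)
  linarith

lemma bSeq_lt_aSeq_succ {n : ℕ} (hn : 1 ≤ n) : bSeq n < aSeq (n + 1) := by
  have hlog : Real.log ((n : ℝ) + 1) ^ 2 ≤ (n : ℝ) ^ 2 :=
    pow_le_pow_left₀ (log_nat_add_one_pos hn).le (log_nat_add_one_le n) 2
  have hbn : bSeq n ≤ aSeq n * (1 + (n : ℝ) ^ 2) := by
    have := mul_le_mul (aSeq_strictMono.monotone (mIdx_le hn)) hlog (by positivity)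
      (aSeq_pos n).le
    unfold bSeq; linarith
  have hsq : (n : ℝ) ^ 2 < 2 ^ (2 * n) := by
    have : (n : ℝ) < 2 ^ n := by exact_mod_cast Nat.lt_two_pow_self
    rw [pow_mul']; gcongr
  have : 1 + (n : ℝ) ^ 2 < 2 ^ (2 * n + 1) := by
    rw [pow_succ 2 (2 * n)]; linarith [one_le_pow₀ (one_le_two (α := ℝ)) (n := 2 * n)]
  rw [aSeq_succ]
  exact hbn.trans_lt (by gcongr; exact aSeq_pos n)

lemma bSeq_lt_cSeq {n : ℕ} (hn : 1 ≤ n) : bSeq n < cSeq n := by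
  unfold cSeq; linarith [bSeq_lt_aSeq_succ hn]

lemma cSeq_lt_aSeq_succ {n : ℕ} (hn : 1 ≤ n) : cSeq n < aSeq (n + 1) := by
  unfold cSeq; linarith [bSeq_lt_aSeq_succ hn]

lemma AffineOnIcc.mem_of_convex {f : ℝ → ℝ} {p q : ℝ} {s : Set ℝ} (h : AffineOnIcc f p q)
    (hpq : p < q) (hs : Convex ℝ s) (hp : f p ∈ s) (hq : f q ∈ s) {x : ℝ}
    (hx : x ∈ Icc p q) : f x ∈ s := by
  rw [h x hx]
  exact hs.add_smul_sub_mem hp hq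
    ⟨div_nonneg (by linarith [hx.1]) (by linarith), div_le_one_of_le₀ (by linarith [hx.2])
      (by linarith)⟩

lemma exists_mem_Ico_of_tendsto_atTop {α : Type*} [LinearOrder α] [NoMaxOrder α] {a : ℕ → α}
    (ha : Tendsto a atTop atTop) {m : ℕ} {x : α} (hx : a m ≤ x) :
    ∃ j, m ≤ j ∧ x ∈ Ico (a j) (a (j + 1)) := by
  classical
  obtain ⟨k, hxk, hmk⟩ := ((ha.eventually_gt_atTop x).and (eventually_ge_atTop m)).exists
  set j := Nat.findGreatest (a · ≤ x) k
  have hj : a j ≤ x := Nat.findGreatest_spec (P := (a · ≤ x)) hmk hx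
  refine ⟨j, Nat.le_findGreatest (P := (a · ≤ x)) hmk hx, hj, ?_⟩
  rcases (Nat.findGreatest_le (P := (a · ≤ x)) k).lt_or_eq with hlt | heq
  · exact not_le.1 (Nat.findGreatest_is_greatest (Nat.lt_succ_self j) hlt)
  · exact absurd (heq ▸ hj) (not_le.2 hxk)

lemma setIntegral_Ioc_mul_le_sq_mul {f : ℝ → ℝ} {a C x : ℝ} (hf : ∀ t, 0 ≤ f t)
    (hC : ∀ t, a ≤ t → f t ≤ C) (ha : 0 ≤ a) (hx : 0 ≤ x) :
    ∫ y in Ioc a (x - a), f (x - y) * f y ≤ C ^ 2 * x := by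
  have hbound : ∀ y ∈ Ioc a (x - a), ‖f (x - y) * f y‖ ≤ C ^ 2 := fun y hy => by
    have hfy := hC y hy.1.le
    rw [Real.norm_of_nonneg (mul_nonneg (hf _) (hf _)), sq]
    exact mul_le_mul (hC _ (by linarith [hy.2])) hfy (hf y) ((hf y).trans hfy)
  calc ∫ y in Ioc a (x - a), f (x - y) * f y
      ≤ ‖∫ y in Ioc a (x - a), f (x - y) * f y‖ := Real.le_norm_self _
    _ ≤ C ^ 2 * volume.real (Ioc a (x - a)) :=
      norm_setIntegral_le_of_norm_le_const measure_Ioc_lt_top hbound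
    _ ≤ C ^ 2 * x := by
      gcongr
      rw [Real.volume_real_Ioc]
      exact max_le (by linarith) hx

/-- Stated for `c ≥ 0` so that it applies to `c = (∫ f₀)⁻¹`, which is `0` if the integral takes
its junk value. -/
lemma div_le_mul_div_of_le_sq_mul {J F c A B : ℝ} (hJ₀ : 0 ≤ J) (hJ : J ≤ c ^ 2 * A)
    (hF : c * B ≤ F) (hc : 0 ≤ c) (hB : 0 < B) : J / F ≤ c * (A / B) := by
  rcases hc.eq_or_lt with rfl | hc
  · simp [le_antisymm (by simpa using hJ) hJ₀]
  calc J / F ≤ c ^ 2 * A / (c * B) := div_le_div₀ (hJ₀.trans hJ) hJ (by positivity) hF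
    _ = c * (A / B) := by field_simp

lemma tendsto_sSup_image_of_le {ι α : Type*} {l : Filter ι} {S : ι → Set α}
    {g : ι → α → ℝ} {u : ι → ℝ} (hu : Tendsto u l (nhds 0)) (hu₀ : ∀ᶠ i in l, 0 ≤ u i)
    (hg : ∀ᶠ i in l, ∀ x ∈ S i, 0 ≤ g i x ∧ g i x ≤ u i) :
    Tendsto (fun i => sSup (g i '' S i)) l (nhds 0) := by
  refine tendsto_of_tendsto_of_tendsto_of_le_of_le' tendsto_const_nhds hu ?_ ?_
  · filter_upwards [hg] with i hi
    exact Real.sSup_nonneg (forall_mem_image.2 fun x hx => (hi x hx).1)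
  · filter_upwards [hg, hu₀] with i hi hui
    exact Real.sSup_le (forall_mem_image.2 fun x hx => (hi x hx).2) hui

section normExt

variable {f₀ : ℝ → ℝ}

lemma normExt_nonneg (hf₀ : ∀ x, 0 ≤ x → 0 ≤ f₀ x) (x : ℝ) : 0 ≤ normExt f₀ x := by
  unfold normExt
  split_ifs with hx
  · exact le_rfl
  · exact div_nonneg (hf₀ x (not_lt.1 hx)) (setIntegral_nonneg measurableSet_Ici hf₀)

lemma normExt_of_nonneg {x : ℝ} (hx : 0 ≤ x) :
    normExt f₀ x = (∫ y in Ici (0 : ℝ), f₀ y)⁻¹ * f₀ x := by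
  simp [normExt, hx.not_gt, div_eq_inv_mul]

end normExt

namespace PWConstruction

variable {f₀ : ℝ → ℝ}

lemma mem_Icc_of_mem_block (hf₀ : PWConstruction f₀) {n : ℕ} (hn : 2 ≤ n) {x : ℝ}
    (hx : x ∈ Icc (aSeq n) (aSeq (n + 1))) :
    f₀ x ∈ Icc (2 / aSeq (n + 1) ^ 3) (2 / aSeq n ^ 3) := by
  obtain ⟨-, -, -, hval, -, haff⟩ := hf₀
  obtain ⟨hfa, hfb, hfc⟩ := hval n (by omega)
  obtain ⟨hab, hbc, hca⟩ := haff n (by omega)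
  have hpos := aSeq_pos n
  have hlog := one_le_log_nat_add_one hn
  have ha : 2 / aSeq n ^ 3 ∈ Icc (2 / aSeq (n + 1) ^ 3) (2 / aSeq n ^ 3) :=
    ⟨by gcongr; exact aSeq_strictMono.monotone (Nat.le_succ n), le_rfl⟩
  have hb : 2 / aSeq n ^ 3 / Real.log ((n : ℝ) + 1) ∈
      Icc (2 / aSeq (n + 1) ^ 3) (2 / aSeq n ^ 3) := by
    refine ⟨?_, div_le_self (by positivity) hlog⟩
    rw [div_div]; gcongr; exact aSeq_pow_three_mul_log_le n
  have ha' : f₀ (aSeq (n + 1)) ∈ Icc (2 / aSeq (n + 1) ^ 3) (2 / aSeq n ^ 3) := by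
    rw [(hval (n + 1) (by omega)).1]
    exact ⟨le_rfl, ha.1⟩
  rcases le_total x (bSeq n) with hxb | hxb
  · exact hab.mem_of_convex (aSeq_lt_bSeq (by omega)) (convex_Icc _ _) (hfa ▸ ha) (hfb ▸ hb)
      ⟨hx.1, hxb⟩
  rcases le_total x (cSeq n) with hxc | hxc
  · exact hbc.mem_of_convex (bSeq_lt_cSeq (by omega)) (convex_Icc _ _) (hfb ▸ hb) (hfc ▸ ha)
      ⟨hxb, hxc⟩
  · exact hca.mem_of_convex (cSeq_lt_aSeq_succ (by omega)) (convex_Icc _ _) (hfc ▸ ha) ha'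
      ⟨hxc, hx.2⟩

lemma le_two_div_aSeq_pow_three (hf₀ : PWConstruction f₀) {m : ℕ} (hm : 2 ≤ m) {x : ℝ}
    (hx : aSeq m ≤ x) : f₀ x ≤ 2 / aSeq m ^ 3 := by
  obtain ⟨j, hmj, hxj⟩ := exists_mem_Ico_of_tendsto_atTop tendsto_aSeq_atTop hx
  refine (hf₀.mem_Icc_of_mem_block (hm.trans hmj) (Ico_subset_Icc_self hxj)).2.trans ?_
  have := aSeq_pos m
  gcongr
  exact aSeq_strictMono.monotone hmj

lemma normExt_convolution_div_le (hf₀ : PWConstruction f₀) {n : ℕ} (hn : 10 ≤ n)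
    {x : ℝ} (hx : x ∈ Ioc (aSeq n) (aSeq (n + 1))) :
    (∫ y in Ioc (aSeq (mIdx n)) (x - aSeq (mIdx n)), normExt f₀ (x - y) * normExt f₀ y) /
        normExt f₀ x ≤
      (∫ y in Ici (0 : ℝ), f₀ y)⁻¹ * (2 * (aSeq (n + 1) ^ 4 / aSeq (mIdx n) ^ 6)) := by
  set c := (∫ y in Ici (0 : ℝ), f₀ y)⁻¹
  set m := mIdx n
  have hpos : ∀ t, 0 ≤ t → 0 ≤ f₀ t := fun t ht => (hf₀.2.1 t ht).le
  have hc : 0 ≤ c := inv_nonneg.2 (setIntegral_nonneg measurableSet_Ici hpos)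
  have hm : 2 ≤ m := by nlinarith [five_mul_sq_le_six_mul_mIdx_sq n]
  have ham := aSeq_pos m
  have hx₀ : 0 ≤ x := (aSeq_pos n).le.trans hx.1.le
  have hupper : ∀ t, aSeq m ≤ t → normExt f₀ t ≤ c * (2 / aSeq m ^ 3) := fun t ht => by
    rw [normExt_of_nonneg (ham.le.trans ht)]
    exact mul_le_mul_of_nonneg_left (hf₀.le_two_div_aSeq_pow_three hm ht) hc
  have hlower : c * (2 / aSeq (n + 1) ^ 3) ≤ normExt f₀ x := by
    rw [normExt_of_nonneg hx₀]
    exact mul_le_mul_of_nonneg_left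
      (hf₀.mem_Icc_of_mem_block (by omega) ⟨hx.1.le, hx.2⟩).1 hc
  have hconv := setIntegral_Ioc_mul_le_sq_mul (normExt_nonneg hpos) hupper ham.le hx₀
  rw [mul_pow, mul_assoc] at hconv
  have han := aSeq_pos (n + 1)
  calc _ ≤ c * ((2 / aSeq m ^ 3) ^ 2 * x / (2 / aSeq (n + 1) ^ 3)) :=
        div_le_mul_div_of_le_sq_mul
          (integral_nonneg fun y => mul_nonneg (normExt_nonneg hpos _) (normExt_nonneg hpos _))
          hconv hlower hc (by positivity)
    _ ≤ c * ((2 / aSeq m ^ 3) ^ 2 * aSeq (n + 1) / (2 / aSeq (n + 1) ^ 3)) := by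
        gcongr; exact hx.2
    _ = c * (2 * (aSeq (n + 1) ^ 4 / aSeq m ^ 6)) := by field_simp

end PWConstruction

theorem pw_density_convolution_middle_negligible (f₀ : ℝ → ℝ)
    (hf₀ : PWConstruction f₀) (f : ℝ → ℝ) (hf : f = normExt f₀) :
    Tendsto (fun n : ℕ =>
        sSup ((fun x : ℝ =>
          (∫ y in Set.Ioc (aSeq (mIdx n)) (x - aSeq (mIdx n)), f (x - y) * f y) / f x) ''
            Set.Ioc (aSeq n) (aSeq (n + 1)))) atTop (nhds 0) := by
  subst hf
  have hpos : ∀ t, 0 ≤ t → 0 ≤ f₀ t := fun t ht => (hf₀.2.1 t ht).le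
  set c := (∫ y in Ici (0 : ℝ), f₀ y)⁻¹
  have hc : 0 ≤ c := inv_nonneg.2 (setIntegral_nonneg measurableSet_Ici hpos)
  have hu := (tendsto_aSeq_succ_pow_four_div_aSeq_mIdx_pow_six.const_mul 2).const_mul c
  rw [mul_zero, mul_zero] at hu
  refine tendsto_sSup_image_of_le hu
    (Eventually.of_forall fun n => by have := aSeq_pos n; positivity) ?_
  filter_upwards [eventually_ge_atTop 10] with n hn x hx
  exact ⟨div_nonneg (integral_nonneg fun y => mul_nonneg (normExt_nonneg hpos _)
    (normExt_nonneg hpos _)) (normExt_nonneg hpos _), hf₀.normExt_convolution_div_le hn hx⟩
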